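/- arXiv:1909.10150 — 4 statements merged into one kernel-verified Lean document; each statement's English description precedes it below -/
import Mathlib

section
/- Let ψ₊, ψ₋ ∈ (0,π) and set S := ψ₊ + ψ₋. Then there exists a unique c ∈ ℝ such that c·sin θ + S > 0 for all θ ∈ [−ψ₊, ψ₋] and ∫_{−ψ₊}^{ψ₋} sin θ / (c·sin θ + S) dθ = 0. Moreover this c satisfies: c > 0 if and only if ψ₋ > ψ₊, c = 0 if and only if ψ₋ = ψ₊, c < 0 if and only if ψ₋ < ψ₊; and ∫_{−ψ₊}^{ψ₋} dθ / (c·sin θ + S) = 1 (so the curve with curvature κ_W(θ) = −c·sin θ − S, θ ∈ [−ψ₊,ψ₋], has length 1). -/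
/-!
Write `D_c(θ) = c sin θ + S`, `F(c) = ∫ sin θ / D_c` and `L(c) = ∫ 1 / D_c` over `[a, b]`.
The pointwise identity `c sin θ / D_c + S / D_c = 1` gives `c F(c) + S L(c) = b - a`, so a zero
of `F` has `L = (b - a) / S`. Since
`F(c₁) - F(c₂) = (c₂ - c₁) ∫ sin² θ / (D_{c₁} D_{c₂})`, `F` is strictly decreasing on the
interval of admissible speeds (those with `D_c > 0`), which gives uniqueness and, compared with
`F(0) = (cos a - cos b) / S`, the sign of the zero. For existence, as `c` increases to the
critical speed at which `D_c` vanishes at the minimum `θ₀` of `sin`, `D_c` grows at most linearly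
away from `θ₀`, so `L(c)` blows up logarithmically; the identity then forces `F(c) < 0`.
Reflecting `θ ↦ -θ` gives a negative admissible speed with `F > 0`, and the intermediate value
theorem a zero in between.
-/

open Real Set intervalIntegral
open MeasureTheory (volume)

namespace TravelingWave

def admissible (a b S : ℝ) : Set ℝ := {c | ∀ θ ∈ Icc a b, 0 < c * sin θ + S}

/-- With curvature `-(c sin θ + S)` the profile has `ds = dθ / (c sin θ + S)`: `height` is the
difference in height of its endpoints and `length` its length. -/
noncomputable def height (a b S c : ℝ) : ℝ := ∫ θ in a..b, sin θ / (c * sin θ + S)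

noncomputable def length (a b S c : ℝ) : ℝ := ∫ θ in a..b, 1 / (c * sin θ + S)

variable {a b S : ℝ}

lemma intervalIntegrable_div_of_admissible {c : ℝ} (hab : a ≤ b) (hc : c ∈ admissible a b S)
    {f : ℝ → ℝ} (hf : Continuous f) :
    IntervalIntegrable (fun θ => f θ / (c * sin θ + S)) volume a b := by
  refine ContinuousOn.intervalIntegrable ?_
  rw [uIcc_of_le hab]
  exact hf.continuousOn.div (by fun_prop) fun θ hθ => (hc θ hθ).ne'

lemma mul_height_add_mul_length {c : ℝ} (hab : a ≤ b) (hc : c ∈ admissible a b S) :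
    c * height a b S c + S * length a b S c = b - a := by
  rw [height, length, ← integral_const_mul, ← integral_const_mul,
    ← integral_add ((intervalIntegrable_div_of_admissible hab hc continuous_sin).const_mul c)
      ((intervalIntegrable_div_of_admissible hab hc continuous_const).const_mul S)]
  have hpointwise : EqOn (fun θ => c * (sin θ / (c * sin θ + S)) + S * (1 / (c * sin θ + S)))
      (fun _ => 1) (uIcc a b) := by
    intro θ hθ
    rw [uIcc_of_le hab] at hθ
    have := (hc θ hθ).ne'
    field_simp
  rw [integral_congr hpointwise, integral_const, smul_eq_mul, mul_one]

lemma length_eq_of_height_eq_zero {c : ℝ} (hS : 0 < S) (hab : a ≤ b)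
    (hc : c ∈ admissible a b S) (hF : height a b S c = 0) :
    length a b S c = (b - a) / S := by
  rw [eq_div_iff hS.ne', ← mul_height_add_mul_length hab hc, hF]
  ring

lemma height_sub_height {c₁ c₂ : ℝ} (hab : a ≤ b) (h₁ : c₁ ∈ admissible a b S)
    (h₂ : c₂ ∈ admissible a b S) :
    height a b S c₁ - height a b S c₂ =
      (c₂ - c₁) * ∫ θ in a..b, sin θ ^ 2 / ((c₁ * sin θ + S) * (c₂ * sin θ + S)) := by
  rw [height, height,
    ← integral_sub (intervalIntegrable_div_of_admissible hab h₁ continuous_sin)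
      (intervalIntegrable_div_of_admissible hab h₂ continuous_sin), ← integral_const_mul]
  refine integral_congr fun θ hθ => ?_
  rw [uIcc_of_le hab] at hθ
  rw [div_sub_div _ _ (h₁ θ hθ).ne' (h₂ θ hθ).ne', ← mul_div_assoc]
  ring

lemma integral_sin_sq_div_pos (ha : a ≤ 0) (hb : 0 < b) (hbπ : b ≤ π) {g : ℝ → ℝ}
    (hg : ContinuousOn g (Icc a b)) (hg_pos : ∀ θ ∈ Icc a b, 0 < g θ) :
    0 < ∫ θ in a..b, sin θ ^ 2 / g θ := by
  have hint : IntervalIntegrable (fun θ => sin θ ^ 2 / g θ) volume a b := by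
    refine ContinuousOn.intervalIntegrable ?_
    rw [uIcc_of_le (ha.trans hb.le)]
    exact (by fun_prop : Continuous fun θ => sin θ ^ 2).continuousOn.div hg
      fun θ hθ => (hg_pos θ hθ).ne'
  calc 0 < ∫ θ in (0 : ℝ)..b, sin θ ^ 2 / g θ := by
        refine intervalIntegral_pos_of_pos_on (hint.mono_set ?_) (fun θ hθ => ?_) hb
        · rw [uIcc_of_le (ha.trans hb.le), uIcc_of_le hb.le]
          exact Icc_subset_Icc_left ha
        · have := sin_pos_of_pos_of_lt_pi hθ.1 (hθ.2.trans_le hbπ)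
          exact div_pos (by positivity) (hg_pos θ ⟨ha.trans hθ.1.le, hθ.2.le⟩)
    _ ≤ ∫ θ in a..b, sin θ ^ 2 / g θ := by
        refine integral_mono_interval ha hb.le le_rfl ?_ hint
        refine (MeasureTheory.ae_restrict_mem measurableSet_Ioc).mono fun θ hθ => ?_
        exact div_nonneg (sq_nonneg _) (hg_pos θ (Ioc_subset_Icc_self hθ)).le

lemma height_strictAntiOn (ha : a ≤ 0) (hb : 0 < b) (hbπ : b ≤ π) :
    StrictAntiOn (height a b S) (admissible a b S) := by
  intro c₁ h₁ c₂ h₂ hlt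
  have hdiff := height_sub_height (ha.trans hb.le) h₁ h₂
  have hpos := integral_sin_sq_div_pos ha hb hbπ (g := fun θ => (c₁ * sin θ + S) * (c₂ * sin θ + S))
    (by fun_prop) fun θ hθ => mul_pos (h₁ θ hθ) (h₂ θ hθ)
  nlinarith

lemma ordConnected_admissible : (admissible a b S).OrdConnected := by
  refine ⟨fun c₁ h₁ c₂ h₂ c hc θ hθ => ?_⟩
  rcases le_total 0 (sin θ) with hs | hs
  · nlinarith [h₁ θ hθ, hc.1]
  · nlinarith [h₂ θ hθ, hc.2]

lemma continuousOn_height {c₁ c₂ : ℝ} (hab : a ≤ b) (h₁ : c₁ ∈ admissible a b S)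
    (h₂ : c₂ ∈ admissible a b S) : ContinuousOn (height a b S) (Icc c₁ c₂) := by
  rcases (Icc c₁ c₂).eq_empty_or_nonempty with h | hne
  · simp [h]
  obtain ⟨p, hp, hmin⟩ := (isCompact_Icc.prod isCompact_Icc).exists_isMinOn
    (hne.prod (nonempty_Icc.2 hab)) (f := fun p : ℝ × ℝ => p.1 * sin p.2 + S) (by fun_prop)
  set ε := p.1 * sin p.2 + S
  have hε : 0 < ε := ordConnected_admissible.out h₁ h₂ hp.1 _ hp.2
  -- Clamping the denominator below by `ε` makes the integrand jointly continuous without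
  -- changing it for `c ∈ [c₁, c₂]`.
  have hcont : Continuous fun c => ∫ θ in a..b, sin θ / max (c * sin θ + S) ε :=
    continuous_parametric_intervalIntegral_of_continuous'
      ((by fun_prop : Continuous fun p : ℝ × ℝ => sin p.2).div (by fun_prop)
        fun p => (lt_max_of_lt_right hε).ne') a b
  refine hcont.continuousOn.congr fun c hc => integral_congr fun θ hθ => ?_
  rw [uIcc_of_le hab] at hθ
  simp only [max_eq_left (show ε ≤ c * sin θ + S from hmin (mk_mem_prod hc hθ))]

lemma integral_one_div_linear {α δ θ₀ b : ℝ} (hα : 0 < α) (hδ : 0 < δ) (hb : θ₀ ≤ b) :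
    ∫ θ in θ₀..b, 1 / (α * (θ - θ₀) + δ) = log ((α * (b - θ₀) + δ) / δ) / α := by
  have h := integral_comp_mul_add (a := θ₀) (b := b) (fun x => 1 / x) hα.ne' (δ - α * θ₀)
  simp only [smul_eq_mul] at h
  rw [show α * θ₀ + (δ - α * θ₀) = δ by ring, integral_one_div_of_pos hδ (by nlinarith)] at h
  rw [div_eq_inv_mul, ← show α * b + (δ - α * θ₀) = α * (b - θ₀) + δ by ring, ← h]
  congr 1 with θ
  ring_nf

lemma log_div_le_integral_one_div {α δ θ₀ b : ℝ} (hα : 0 < α) (hδ : 0 < δ) (hb : θ₀ ≤ b)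
    {g : ℝ → ℝ} (hg : ContinuousOn g (Icc θ₀ b)) (hg_pos : ∀ θ ∈ Icc θ₀ b, 0 < g θ)
    (hg_le : ∀ θ ∈ Icc θ₀ b, g θ ≤ α * (θ - θ₀) + δ) :
    log ((α * (b - θ₀) + δ) / δ) / α ≤ ∫ θ in θ₀..b, 1 / g θ := by
  rw [← integral_one_div_linear hα hδ hb]
  have hlin_pos : ∀ θ ∈ Icc θ₀ b, 0 < α * (θ - θ₀) + δ := fun θ hθ => by nlinarith [hθ.1]
  refine integral_mono_on hb ?_ ?_ fun θ hθ => one_div_le_one_div_of_le (hg_pos θ hθ) (hg_le θ hθ)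
  · refine ContinuousOn.intervalIntegrable ?_
    rw [uIcc_of_le hb]
    exact continuousOn_const.div (by fun_prop) fun θ hθ => (hlin_pos θ hθ).ne'
  · refine ContinuousOn.intervalIntegrable ?_
    rw [uIcc_of_le hb]
    exact continuousOn_const.div hg fun θ hθ => (hg_pos θ hθ).ne'

lemma exists_admissible_lt_length {θ₀ : ℝ} (hθ₀ : θ₀ ∈ Ico a b) (hmin : IsMinOn sin (Icc a b) θ₀)
    (hneg : sin θ₀ < 0) (hS : 0 < S) (M : ℝ) :
    ∃ c, 0 < c ∧ c ∈ admissible a b S ∧ M < length a b S c := by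
  -- `α` is the critical speed, at which `α sin θ + S` vanishes at `θ₀`; `c` falls short of it
  -- by just enough that `c sin θ₀ + S = δ`.
  set α := S / -sin θ₀
  have hα : 0 < α := div_pos hS (neg_pos.2 hneg)
  set δ := min (S / 2) (α * (b - θ₀) / exp (α * M))
  have hr : 0 < b - θ₀ := sub_pos.2 hθ₀.2
  have hδ : 0 < δ := lt_min (half_pos hS) (by positivity)
  have hδS : δ < S := (min_le_left _ _).trans_lt (half_lt_self hS)
  set c := (S - δ) / -sin θ₀
  have hc : 0 < c := div_pos (sub_pos.2 hδS) (neg_pos.2 hneg)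
  have hcα : c ≤ α := div_le_div_of_nonneg_right (by linarith) (neg_pos.2 hneg).le
  have hcθ₀ : c * sin θ₀ + S = δ := by
    rw [div_mul_eq_mul_div, div_neg, mul_div_assoc, div_self hneg.ne, mul_one]
    ring
  have hA : c ∈ admissible a b S := fun θ hθ => by
    nlinarith [show sin θ₀ ≤ sin θ from hmin hθ]
  have hupper : ∀ θ ∈ Icc θ₀ b, c * sin θ + S ≤ α * (θ - θ₀) + δ := by
    intro θ hθ
    have hsin : sin θ₀ ≤ sin θ := hmin ⟨hθ₀.1.trans hθ.1, hθ.2⟩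
    have hlip : sin θ - sin θ₀ ≤ θ - θ₀ := (le_abs_self _).trans
      ((abs_sin_sub_sin_le θ θ₀).trans_eq (abs_of_nonneg (sub_nonneg.2 hθ.1)))
    nlinarith [mul_le_mul hcα hlip (sub_nonneg.2 hsin) hα.le]
  have hsub : Icc θ₀ b ⊆ Icc a b := Icc_subset_Icc_left hθ₀.1
  refine ⟨c, hc, hA, ?_⟩
  calc M < log ((α * (b - θ₀) + δ) / δ) / α := by
        have : δ * exp (α * M) ≤ α * (b - θ₀) := (le_div_iff₀ (exp_pos _)).1 (min_le_right _ _)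
        rw [lt_div_iff₀ hα, lt_log_iff_exp_lt (by positivity), lt_div_iff₀ hδ, mul_comm M]
        linarith
    _ ≤ ∫ θ in θ₀..b, 1 / (c * sin θ + S) :=
        log_div_le_integral_one_div hα hδ hθ₀.2.le (by fun_prop) (fun θ hθ => hA θ (hsub hθ))
          hupper
    _ ≤ length a b S c := by
        refine integral_mono_interval hθ₀.1 hθ₀.2.le le_rfl ?_
          (intervalIntegrable_div_of_admissible (hθ₀.1.trans hθ₀.2.le) hA continuous_const)
        refine (MeasureTheory.ae_restrict_mem measurableSet_Ioc).mono fun θ hθ => ?_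
        exact (one_div_pos.2 (hA θ (Ioc_subset_Icc_self hθ))).le

lemma exists_pos_admissible_height_neg (ha : -π < a) (ha0 : a < 0) (hb0 : 0 < b) (hb : b < π)
    (hS : 0 < S) : ∃ c, 0 < c ∧ c ∈ admissible a b S ∧ height a b S c < 0 := by
  have hab : a ≤ b := by linarith
  obtain ⟨θ₀, hθ₀, hmin⟩ := isCompact_Icc.exists_isMinOn (nonempty_Icc.2 hab)
    continuous_sin.continuousOn
  have hneg : sin θ₀ < 0 :=
    (hmin (left_mem_Icc.2 hab)).trans_lt (sin_neg_of_neg_of_neg_pi_lt ha0 ha)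
  have hθ₀b : θ₀ < b := hθ₀.2.lt_of_ne fun h =>
    (h ▸ hneg).not_gt (sin_pos_of_pos_of_lt_pi hb0 hb)
  obtain ⟨c, hc, hA, hL⟩ := exists_admissible_lt_length ⟨hθ₀.1, hθ₀b⟩ hmin hneg hS ((b - a) / S)
  refine ⟨c, hc, hA, ?_⟩
  have := mul_height_add_mul_length hab hA
  rw [div_lt_iff₀ hS] at hL
  nlinarith

lemma neg_mem_admissible {c : ℝ} (hc : c ∈ admissible (-b) (-a) S) : -c ∈ admissible a b S :=
  fun θ hθ => by simpa using hc (-θ) ⟨neg_le_neg hθ.2, neg_le_neg hθ.1⟩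

lemma height_neg (c : ℝ) : height a b S (-c) = -height (-b) (-a) S c := by
  rw [height, height, ← integral_comp_neg, ← integral_neg]
  congr 1 with θ
  rw [sin_neg]
  ring

lemma exists_height_eq_zero (ha : -π < a) (ha0 : a < 0) (hb0 : 0 < b) (hb : b < π)
    (hS : 0 < S) : ∃ c ∈ admissible a b S, height a b S c = 0 := by
  obtain ⟨c₂, hc₂, hA₂, hF₂⟩ := exists_pos_admissible_height_neg ha ha0 hb0 hb hS
  obtain ⟨c', hc', hA', hF'⟩ := exists_pos_admissible_height_neg (a := -b) (b := -a)
    (by linarith) (by linarith) (by linarith) (by linarith) hS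
  have hA₁ := neg_mem_admissible hA'
  have hF₁ : 0 < height a b S (-c') := by rw [height_neg]; linarith
  obtain ⟨c, hc, hF⟩ := intermediate_value_Icc' (by linarith)
    (continuousOn_height (by linarith) hA₁ hA₂) ⟨hF₂.le, hF₁.le⟩
  exact ⟨c, ordConnected_admissible.out hA₁ hA₂ hc, hF⟩

lemma height_zero : height a b S 0 = (cos a - cos b) / S := by
  simp [height, integral_div]

end TravelingWave

/-- **Existence and uniqueness of the traveling wave speed.**
For contact angles `ψ₊, ψ₋ ∈ (0,π)` there is a unique `c ∈ ℝ` with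
`c sin θ + S > 0` on `[−ψ₊,ψ₋]` and `∫ sin θ/(c sin θ + S) dθ = 0` (`S = ψ₊+ψ₋`);
moreover the sign of `c` matches the sign of `ψ₋ − ψ₊`, and
`∫ dθ/(c sin θ + S) = 1`, i.e. the corresponding profile curve has length `1`. -/
theorem traveling_wave_speed
    (ψp ψm : ℝ) (hψp : ψp ∈ Set.Ioo 0 π) (hψm : ψm ∈ Set.Ioo 0 π) :
    ∃ c : ℝ,
      ((∀ θ ∈ Set.Icc (-ψp) ψm, 0 < c * Real.sin θ + (ψp + ψm))
        ∧ (∫ θ in (-ψp)..ψm, Real.sin θ / (c * Real.sin θ + (ψp + ψm))) = 0)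
      ∧ ((0 < c ↔ ψp < ψm) ∧ (c = 0 ↔ ψm = ψp) ∧ (c < 0 ↔ ψm < ψp))
      ∧ (∫ θ in (-ψp)..ψm, 1 / (c * Real.sin θ + (ψp + ψm))) = 1
      ∧ (∀ c' : ℝ,
          (∀ θ ∈ Set.Icc (-ψp) ψm, 0 < c' * Real.sin θ + (ψp + ψm)) →
          (∫ θ in (-ψp)..ψm, Real.sin θ / (c' * Real.sin θ + (ψp + ψm))) = 0 →
          c' = c) := by
  open TravelingWave in
  have hS : 0 < ψp + ψm := by linarith [hψp.1, hψm.1]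
  obtain ⟨c, hc, hF⟩ := exists_height_eq_zero (S := ψp + ψm) (by linarith [hψp.2])
    (neg_lt_zero.2 hψp.1) hψm.1 hψm.2 hS
  have hanti : StrictAntiOn (height (-ψp) ψm (ψp + ψm)) (admissible (-ψp) ψm (ψp + ψm)) :=
    height_strictAntiOn (neg_nonpos.2 hψp.1.le) hψm.1 hψm.2.le
  have h0 : (0 : ℝ) ∈ admissible (-ψp) ψm (ψp + ψm) := fun θ _ => by simpa using hS
  have hF0 : height (-ψp) ψm (ψp + ψm) 0 = (cos ψp - cos ψm) / (ψp + ψm) := by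
    rw [height_zero, cos_neg]
  have hψp' : ψp ∈ Icc 0 π := Ioo_subset_Icc_self hψp
  have hψm' : ψm ∈ Icc 0 π := Ioo_subset_Icc_self hψm
  refine ⟨c, ⟨hc, hF⟩, ⟨?_, ?_, ?_⟩, ?_, fun c' hc' hF' => hanti.injOn hc' hc (hF'.trans hF.symm)⟩
  · rw [← hanti.lt_iff_gt hc h0, hF, hF0, div_pos_iff_of_pos_right hS, sub_pos,
      strictAntiOn_cos.lt_iff_gt hψm' hψp']
  · rw [← hanti.injOn.eq_iff hc h0, hF, hF0, eq_comm, div_eq_zero_iff, or_iff_left hS.ne',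
      sub_eq_zero, strictAntiOn_cos.injOn.eq_iff hψp' hψm', eq_comm]
  · rw [← hanti.lt_iff_gt h0 hc, hF, hF0, div_lt_iff₀ hS, zero_mul, sub_neg,
      strictAntiOn_cos.lt_iff_gt hψp' hψm']
  · rw [← length, length_eq_of_height_eq_zero hS (by linarith [hψp.1, hψm.1]) hc hF,
      sub_neg_eq_add, add_comm, div_self hS.ne']
end

section
/- Let ψ₊, ψ₋ ∈ (0,π), S := ψ₊ + ψ₋, and let c ∈ ℝ satisfy c·sin θ + S > 0 for all θ ∈ [−ψ₊, ψ₋]. Then ∫_{−ψ₊}^{ψ₋} cos θ / (c·sin θ + S) dθ > 0. -/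
/-!
Substituting `u = sin θ` turns the integral into `∫ du / (c u + S)` from `-sin ψ₊` to `sin ψ₋`.
These limits are in increasing order since `sin ψ± > 0`, and the new integrand is positive
because, by the intermediate value theorem, every `u` between them is `sin θ` for some `θ` in
`[-ψ₊, ψ₋]`.
-/

open Real Set intervalIntegral

theorem intervalIntegral.integral_comp_mul_deriv_pos {a b : ℝ} {f f' g : ℝ → ℝ}
    (hf : ∀ x ∈ uIcc a b, HasDerivAt f (f' x) x) (hf' : ContinuousOn f' (uIcc a b))
    (hg : ContinuousOn g (f '' uIcc a b)) (hg_pos : ∀ u ∈ f '' uIcc a b, 0 < g u)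
    (hfab : f a < f b) :
    0 < ∫ x in a..b, (g ∘ f) x * f' x := by
  have himage : uIcc (f a) (f b) ⊆ f '' uIcc a b :=
    intermediate_value_uIcc fun x hx => (hf x hx).continuousAt.continuousWithinAt
  rw [integral_comp_mul_deriv' hf hf' hg]
  exact intervalIntegral_pos_of_pos_on (hg.mono himage).intervalIntegrable
    (fun u hu => hg_pos u (himage (Icc_subset_uIcc (Ioo_subset_Icc_self hu)))) hfab

/-- **Positivity of the horizontal extent of the traveling wave profile**:
`∫_{−ψ₊}^{ψ₋} cos θ/(c sin θ + S) dθ > 0` whenever `c sin θ + S > 0` on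
`[−ψ₊,ψ₋]`, where `S = ψ₊ + ψ₋`. -/
theorem horizontal_extent_positive
    (ψp ψm c : ℝ) (hψp : ψp ∈ Set.Ioo 0 π) (hψm : ψm ∈ Set.Ioo 0 π)
    (hpos : ∀ θ ∈ Set.Icc (-ψp) ψm, 0 < c * Real.sin θ + (ψp + ψm)) :
    0 < ∫ θ in (-ψp)..ψm, Real.cos θ / (c * Real.sin θ + (ψp + ψm)) := by
  have hsin_p : 0 < sin ψp := sin_pos_of_pos_of_lt_pi hψp.1 hψp.2
  have hsin_m : 0 < sin ψm := sin_pos_of_pos_of_lt_pi hψm.1 hψm.2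
  have hpos' : ∀ θ ∈ uIcc (-ψp) ψm, 0 < c * sin θ + (ψp + ψm) := by
    rwa [uIcc_of_le (by linarith [hψp.1, hψm.1])]
  have hsin_lt : sin (-ψp) < sin ψm := by
    rw [sin_neg]
    linarith
  have key := integral_comp_mul_deriv_pos (g := fun u => (c * u + (ψp + ψm))⁻¹)
    (fun x _ => hasDerivAt_sin x) continuousOn_cos
    ((by fun_prop : Continuous fun u => c * u + (ψp + ψm)).continuousOn.inv₀
      (by rintro _ ⟨θ, hθ, rfl⟩; exact (hpos' θ hθ).ne'))
    (by rintro _ ⟨θ, hθ, rfl⟩; exact inv_pos.2 (hpos' θ hθ)) hsin_lt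
  simpa only [Function.comp_apply, inv_mul_eq_div] using key
end

section
/- Let ψ₊, ψ₋ ∈ (0,π), S := ψ₊ + ψ₋, and let c ∈ ℝ satisfy c·sin θ + S > 0 for all θ ∈ [−ψ₊, ψ₋] and ∫_{−ψ₊}^{ψ₋} sin θ / (c·sin θ + S) dθ = 0. Define κ*(θ) := −(c·sin θ + S). Then the signed area A(κ*) := (1/2)·( −∫_{−ψ₊}^{ψ₋} (sin θ / κ*(θ)) · (∫_θ^{ψ₋} cos θ̃ / κ*(θ̃) dθ̃) dθ + ∫_{−ψ₊}^{ψ₋} (cos θ / κ*(θ)) · (∫_θ^{ψ₋} sin θ̃ / κ*(θ̃) dθ̃) dθ ) is strictly positive. -/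
/-
Write `g = sin/κ`, `h = cos/κ` and let `L` be any antiderivative of `h`. Since `∫ g = 0`, the
primitive `G(θ) = ∫_θ^{ψ₋} g` vanishes at both endpoints, so integration by parts gives
`∫ h G = ∫ g L`, while `∫_θ^{ψ₋} h = L(ψ₋) - L(θ)` gives `∫ g (∫_θ^{ψ₋} h) = -∫ g L`.
Hence `A(κ) = ∫ g L`.

For `κ*(θ) = -(c sin θ + S)` the substitution `v = sin θ` yields the antiderivative
`L(θ) = -∫_0^{sin θ} dv / (c v + S)`. Since `c v + S > 0` between `0` and `sin θ`, the integrand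
`g L = (sin θ ∫_0^{sin θ} dv / (c v + S)) / (c sin θ + S)` is nonnegative, and it is positive
at `θ = ψ₋`.
-/

noncomputable section

open Real Set intervalIntegral

/-- The signed area enclosed by a concave curve with curvature `κ` (in the
tangent-angle parametrization on `[−ψ₊,ψ₋]`) and the `x`-axis. -/
def signedArea (ψp ψm : ℝ) (κ : ℝ → ℝ) : ℝ :=
  (1/2) * (-(∫ θ in (-ψp)..ψm, (Real.sin θ / κ θ)
        * ∫ θ' in θ..ψm, Real.cos θ' / κ θ')
    + ∫ θ in (-ψp)..ψm, (Real.cos θ / κ θ)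
        * ∫ θ' in θ..ψm, Real.sin θ' / κ θ')

section PrimitiveProducts

variable {a b : ℝ} {g h L : ℝ → ℝ}

theorem integral_mul_integral_eq_neg_integral_mul (hg : ContinuousOn g (uIcc a b))
    (hh : ContinuousOn h (uIcc a b)) (hL : ∀ x ∈ uIcc a b, HasDerivAt L (h x) x)
    (hg₀ : ∫ x in a..b, g x = 0) :
    ∫ x in a..b, g x * ∫ t in x..b, h t = -∫ x in a..b, g x * L x := by
  have hFTC : ∀ x ∈ uIcc a b, ∫ t in x..b, h t = L b - L x := fun x hx =>
    integral_eq_sub_of_hasDerivAt (fun t ht => hL t (uIcc_subset_uIcc_right hx ht))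
      (hh.mono (uIcc_subset_uIcc_right hx)).intervalIntegrable
  calc ∫ x in a..b, g x * ∫ t in x..b, h t
      = ∫ x in a..b, (g x * L b - g x * L x) :=
        integral_congr fun x hx => by rw [hFTC x hx, mul_sub]
    _ = -∫ x in a..b, g x * L x := by
        have hgL : IntervalIntegrable (fun x => g x * L x) MeasureTheory.volume a b :=
          (hg.mul (HasDerivAt.continuousOn hL)).intervalIntegrable
        rw [integral_sub (hg.intervalIntegrable.mul_const _) hgL, integral_mul_const, hg₀,
          zero_mul, zero_sub]

theorem integral_mul_integral_eq_integral_mul (hg : ContinuousOn g (uIcc a b))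
    (hh : ContinuousOn h (uIcc a b)) (hL : ∀ x ∈ uIcc a b, HasDerivAt L (h x) x)
    (hg₀ : ∫ x in a..b, g x = 0) :
    ∫ x in a..b, h x * ∫ t in x..b, g t = ∫ x in a..b, g x * L x := by
  have hG : ∀ x ∈ Ioo (min a b) (max a b),
      HasDerivAt (fun y => ∫ t in y..b, g t) (-g x) x := fun x hx =>
    integral_hasDerivAt_left
      (hg.mono (uIcc_subset_uIcc_right (Ioo_subset_Icc_self hx))).intervalIntegrable
      ((hg.mono Ioo_subset_Icc_self).stronglyMeasurableAtFilter isOpen_Ioo x hx)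
      (hg.continuousAt (Filter.mem_of_superset (isOpen_Ioo.mem_nhds hx) Ioo_subset_Icc_self))
  have hIBP := integral_mul_deriv_eq_deriv_mul_of_hasDerivAt (HasDerivAt.continuousOn hL)
    (continuousOn_primitive_interval_left hg.integrableOn_uIcc)
    (fun x hx => hL x (Ioo_subset_Icc_self hx)) hG hh.intervalIntegrable hg.intervalIntegrable.neg
  rw [integral_same, hg₀, mul_zero, mul_zero, sub_zero, zero_sub] at hIBP
  simp only [mul_neg, integral_neg, neg_inj] at hIBP
  simpa only [mul_comm] using hIBP.symm

end PrimitiveProducts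

theorem signedArea_eq_integral_mul {ψp ψm : ℝ} {κ L : ℝ → ℝ}
    (hκ : ContinuousOn κ (uIcc (-ψp) ψm)) (hκ₀ : ∀ θ ∈ uIcc (-ψp) ψm, κ θ ≠ 0)
    (hL : ∀ θ ∈ uIcc (-ψp) ψm, HasDerivAt L (cos θ / κ θ) θ)
    (hbc : ∫ θ in (-ψp)..ψm, sin θ / κ θ = 0) :
    signedArea ψp ψm κ = ∫ θ in (-ψp)..ψm, sin θ / κ θ * L θ := by
  have hsin : ContinuousOn (fun θ => sin θ / κ θ) (uIcc (-ψp) ψm) :=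
    continuous_sin.continuousOn.div hκ hκ₀
  have hcos : ContinuousOn (fun θ => cos θ / κ θ) (uIcc (-ψp) ψm) :=
    continuous_cos.continuousOn.div hκ hκ₀
  rw [signedArea, integral_mul_integral_eq_neg_integral_mul hsin hcos hL hbc,
    integral_mul_integral_eq_integral_mul hsin hcos hL hbc]
  ring

theorem mul_integral_pos_of_pos_on {f : ℝ → ℝ} {a b : ℝ} (hab : a ≠ b)
    (hf : IntervalIntegrable f MeasureTheory.volume a b) (hpos : ∀ x ∈ uIcc a b, 0 < f x) :
    0 < (b - a) * ∫ x in a..b, f x := by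
  rcases hab.lt_or_gt with hab | hba
  · exact mul_pos (sub_pos.2 hab) (intervalIntegral_pos_of_pos_on hf
      (fun x hx => hpos x (by rw [uIcc_of_le hab.le]; exact Ioo_subset_Icc_self hx)) hab)
  · rw [integral_symm, mul_neg, ← neg_mul, neg_sub]
    exact mul_pos (sub_pos.2 hba) (intervalIntegral_pos_of_pos_on hf.symm
      (fun x hx => hpos x (by rw [uIcc_of_ge hba.le]; exact Ioo_subset_Icc_self hx)) hba)

section AffineReciprocal

variable {c S s : ℝ}

theorem affine_pos_of_mem_uIcc {x y v : ℝ} (hx : 0 < c * x + S) (hy : 0 < c * y + S)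
    (hv : v ∈ uIcc x y) : 0 < c * v + S := by
  rcases mem_uIcc.1 hv with ⟨h₁, h₂⟩ | ⟨h₁, h₂⟩ <;>
    rcases le_total 0 c with hc | hc <;> nlinarith

theorem continuousOn_inv_affine_uIcc (hS : 0 < S) (hs : 0 < c * s + S) :
    ContinuousOn (fun v => (c * v + S)⁻¹) (uIcc 0 s) :=
  (continuousOn_const.mul continuousOn_id).add continuousOn_const |>.inv₀ fun v hv =>
    (affine_pos_of_mem_uIcc (by simpa using hS) hs hv).ne'

theorem hasDerivAt_integral_inv_affine (hS : 0 < S) (hs : 0 < c * s + S) :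
    HasDerivAt (fun t => ∫ v in 0..t, (c * v + S)⁻¹) (c * s + S)⁻¹ s := by
  have hmeas : Measurable fun v => (c * v + S)⁻¹ := by fun_prop
  exact integral_hasDerivAt_right (continuousOn_inv_affine_uIcc hS hs).intervalIntegrable
    hmeas.stronglyMeasurable.stronglyMeasurableAtFilter (by fun_prop (disch := exact hs.ne'))

theorem mul_integral_inv_affine_pos (hS : 0 < S) (hs : 0 < c * s + S) (hs₀ : s ≠ 0) :
    0 < s * ∫ v in 0..s, (c * v + S)⁻¹ := by
  simpa using mul_integral_pos_of_pos_on hs₀.symm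
    (continuousOn_inv_affine_uIcc hS hs).intervalIntegrable
    fun v hv => inv_pos.2 (affine_pos_of_mem_uIcc (by simpa using hS) hs hv)

theorem mul_integral_inv_affine_nonneg (hS : 0 < S) (hs : 0 < c * s + S) :
    0 ≤ s * ∫ v in 0..s, (c * v + S)⁻¹ := by
  rcases eq_or_ne s 0 with rfl | hs₀
  · simp
  · exact (mul_integral_inv_affine_pos hS hs hs₀).le

theorem hasDerivAt_neg_integral_inv_affine_sin {θ : ℝ} (hS : 0 < S)
    (hθ : 0 < c * sin θ + S) :
    HasDerivAt (fun θ => -∫ v in 0..sin θ, (c * v + S)⁻¹) (cos θ / -(c * sin θ + S)) θ := by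
  rw [div_neg, div_eq_inv_mul]
  exact ((hasDerivAt_integral_inv_affine hS hθ).comp θ (hasDerivAt_sin θ)).neg

end AffineReciprocal

/-- **Positivity of the signed area of the traveling wave profile**:
if `κ*(θ) = −(c sin θ + S)` is negative on `[−ψ₊,ψ₋]` and
`∫ sin θ/κ* dθ = 0`, then the signed area `A(κ*)` is strictly positive. -/
theorem traveling_wave_area_positive
    (ψp ψm c : ℝ) (hψp : ψp ∈ Set.Ioo 0 π) (hψm : ψm ∈ Set.Ioo 0 π)
    (hpos : ∀ θ ∈ Set.Icc (-ψp) ψm, 0 < c * Real.sin θ + (ψp + ψm))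
    (hbc : (∫ θ in (-ψp)..ψm,
        Real.sin θ / (-(c * Real.sin θ + (ψp + ψm)))) = 0) :
    0 < signedArea ψp ψm (fun θ => -(c * Real.sin θ + (ψp + ψm))) := by
  obtain ⟨hψm₀, hψmπ⟩ := hψm
  have hS : 0 < ψp + ψm := add_pos hψp.1 hψm₀
  have hab : -ψp < ψm := by linarith
  have hpos' : ∀ θ ∈ uIcc (-ψp) ψm, 0 < c * sin θ + (ψp + ψm) := by
    rwa [uIcc_of_le hab.le]
  have hL := fun θ hθ => hasDerivAt_neg_integral_inv_affine_sin hS (hpos' θ hθ)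
  have hcont := (continuous_sin.continuousOn.div (by fun_prop) fun θ hθ =>
    neg_ne_zero.2 (hpos' θ hθ).ne').mul (HasDerivAt.continuousOn hL)
  rw [uIcc_of_le hab.le] at hcont
  rw [signedArea_eq_integral_mul (by fun_prop) (fun θ hθ => neg_ne_zero.2 (hpos' θ hθ).ne')
    hL hbc]
  refine integral_pos hab hcont (fun θ hθ => ?_) ⟨ψm, right_mem_Icc.2 hab.le, ?_⟩ <;>
    simp only [div_neg, neg_mul_neg, div_mul_eq_mul_div]
  · exact div_nonneg (mul_integral_inv_affine_nonneg hS (hpos θ (Ioc_subset_Icc_self hθ)))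
      (hpos θ (Ioc_subset_Icc_self hθ)).le
  · have hψm := hpos ψm (right_mem_Icc.2 hab.le)
    exact div_pos (mul_integral_inv_affine_pos hS hψm
      (sin_pos_of_pos_of_lt_pi hψm₀ hψmπ).ne') hψm
end
end

section
/- Let ψ₊, ψ₋ ∈ (0,π), S := ψ₊ + ψ₋, α ∈ ℝ, and let κ̂ : [−ψ₊, ψ₋] → ℝ be a smooth function with κ̂(θ) < 0 for all θ. Set L := −∫_{−ψ₊}^{ψ₋} dθ/κ̂(θ). Assume: (i) α·κ̂ = κ̂²·(κ̂'' + κ̂ + S/L) on (−ψ₊, ψ₋); (ii) κ̂'(ψ₋) = cot(ψ₋)·(κ̂(ψ₋) + S/L) and κ̂'(−ψ₊) = −cot(ψ₊)·(κ̂(−ψ₊) + S/L); (iii) ∫_{−ψ₊}^{ψ₋} sin θ / κ̂(θ) dθ = 0; and (iv) the signed area A(κ̂) := (1/2)( −∫_{−ψ₊}^{ψ₋}(sin θ/κ̂(θ))(∫_θ^{ψ₋} cos θ̃/κ̂(θ̃) dθ̃)dθ + ∫_{−ψ₊}^{ψ₋}(cos θ/κ̂(θ))(∫_θ^{ψ₋}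 sin θ̃/κ̂(θ̃) dθ̃)dθ ) is strictly positive. Then α = 0, and there exists c ∈ ℝ such that κ̂(θ) = −c·sin θ − S/L for all θ ∈ [−ψ₊, ψ₋]. -/
noncomputable section

open Real Set intervalIntegral

/-- A function continuous on `Icc a b` with vanishing derivative on `Ioo a b`
is constant. -/
private lemma const_on_Icc_aux {a b : ℝ} (hab : a < b) {F : ℝ → ℝ}
    (hc : ContinuousOn F (Icc a b))
    (hd : ∀ t ∈ Ioo a b, HasDerivAt F 0 t) :
    ∀ t ∈ Icc a b, F t = F b := by
  have key : ∀ u ∈ Ioo a b, ∀ v ∈ Ioo a b, u ≤ v → F v = F u := by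
    intro u hu v hv huv
    have hcont : ContinuousOn F (Icc u v) :=
      hc.mono (Icc_subset_Icc hu.1.le hv.2.le)
    have hderiv : ∀ t ∈ Ico u v, HasDerivWithinAt F 0 (Ici t) t := by
      intro t ht
      exact (hd t ⟨lt_of_lt_of_le hu.1 ht.1, ht.2.trans hv.2⟩).hasDerivWithinAt
    exact constant_of_has_deriv_right_zero hcont hderiv v (right_mem_Icc.mpr huv)
  have hm : (a + b) / 2 ∈ Ioo a b := ⟨by linarith, by linarith⟩
  have hIoo : ∀ t ∈ Ioo a b, F t = F ((a + b) / 2) := by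
    intro t ht
    rcases le_total t ((a + b) / 2) with hle | hle
    · exact (key t ht _ hm hle).symm
    · exact key _ hm t ht hle
  have hlim : ∀ w ∈ Icc a b, w ∈ closure (Ioo a b) → F w = F ((a + b) / 2) := by
    intro w hw hwc
    have hne : (nhdsWithin w (Ioo a b)).NeBot := mem_closure_iff_nhdsWithin_neBot.mp hwc
    have h1 : Filter.Tendsto F (nhdsWithin w (Ioo a b)) (nhds (F w)) :=
      (hc w hw).mono_left (nhdsWithin_mono _ Ioo_subset_Icc_self)
    have h2 : Filter.Tendsto F (nhdsWithin w (Ioo a b)) (nhds (F ((a + b) / 2))) := by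
      refine Filter.Tendsto.congr' ?_ tendsto_const_nhds
      filter_upwards [self_mem_nhdsWithin] with t ht
      exact (hIoo t ht).symm
    exact tendsto_nhds_unique h1 h2
  have hclos : closure (Ioo a b) = Icc a b := closure_Ioo hab.ne
  have hFb : F b = F ((a + b) / 2) := by
    refine hlim b (right_mem_Icc.mpr hab.le) ?_
    rw [hclos]; exact right_mem_Icc.mpr hab.le
  intro t ht
  rcases eq_or_lt_of_le ht.1 with h1 | h1
  · have hFa : F a = F ((a + b) / 2) := by
      refine hlim a (left_mem_Icc.mpr hab.le) ?_
      rw [hclos]; exact left_mem_Icc.mpr hab.le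
    rw [← h1, hFa, hFb]
  rcases eq_or_lt_of_le ht.2 with h2 | h2
  · rw [h2]
  · rw [hIoo t ⟨h1, h2⟩, hFb]

/-- **Characterization of ω-limit profiles.** A smooth negative function `kh` on
`[−ψ₊,ψ₋]` satisfying the eigenfunction-type stationary equation
`α kh = kh²(kh'' + kh + S/L)` with the contact-angle boundary conditions, the
endpoint condition `∫ sin θ/kh dθ = 0` and positive signed area must have `α = 0`
and be the curvature `kh(θ) = −c sin θ − S/L` of a traveling wave profile. -/
theorem omega_limit_is_traveling_wave
    (ψp ψm α : ℝ) (hψp : ψp ∈ Set.Ioo 0 π) (hψm : ψm ∈ Set.Ioo 0 π)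
    (kh : ℝ → ℝ)
    (hsmooth : ContDiffOn ℝ (⊤ : ℕ∞) kh (Set.Icc (-ψp) ψm))
    (hneg : ∀ θ ∈ Set.Icc (-ψp) ψm, kh θ < 0)
    (heq : ∀ θ ∈ Set.Ioo (-ψp) ψm,
      α * kh θ = (kh θ)^2
        * (derivWithin (derivWithin kh (Set.Icc (-ψp) ψm)) (Set.Icc (-ψp) ψm) θ
            + kh θ + (ψp + ψm) / (-∫ θ' in (-ψp)..ψm, 1 / kh θ')))
    (hbcp : derivWithin kh (Set.Icc (-ψp) ψm) ψm
      = Real.cot ψm * (kh ψm + (ψp + ψm) / (-∫ θ' in (-ψp)..ψm, 1 / kh θ')))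
    (hbcm : derivWithin kh (Set.Icc (-ψp) ψm) (-ψp)
      = - Real.cot ψp * (kh (-ψp) + (ψp + ψm) / (-∫ θ' in (-ψp)..ψm, 1 / kh θ')))
    (hend : (∫ θ in (-ψp)..ψm, Real.sin θ / kh θ) = 0)
    (harea : 0 < signedArea ψp ψm kh) :
    α = 0 ∧ ∃ c : ℝ, ∀ θ ∈ Set.Icc (-ψp) ψm,
      kh θ = -c * Real.sin θ - (ψp + ψm) / (-∫ θ' in (-ψp)..ψm, 1 / kh θ') := by
  obtain ⟨hp0, hppi⟩ := hψp
  obtain ⟨hm0, hmpi⟩ := hψm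
  have hab : (-ψp) < ψm := by linarith
  have hsm : Real.sin ψm ≠ 0 := (Real.sin_pos_of_pos_of_lt_pi hm0 hmpi).ne'
  set K : Set ℝ := Set.Icc (-ψp) ψm with hKdef
  set I : ℝ := ∫ θ' in (-ψp)..ψm, 1 / kh θ' with hIdef
  set h : ℝ := (ψp + ψm) / (-I) with hhdef
  set k1 : ℝ → ℝ := derivWithin kh K with hk1def
  set k2 : ℝ → ℝ := derivWithin k1 K with hk2def
  have hKu : UniqueDiffOn ℝ K := uniqueDiffOn_Icc hab
  have hne : ∀ θ ∈ K, kh θ ≠ 0 := fun θ hθ => (hneg θ hθ).ne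
  have hkc : ContinuousOn kh K := hsmooth.continuousOn
  have hk1s : ContDiffOn ℝ (⊤ : ℕ∞) k1 K := hsmooth.derivWithin hKu (by simp)
  have hk1c : ContinuousOn k1 K := hk1s.continuousOn
  have hmemN : ∀ θ ∈ Ioo (-ψp) ψm, K ∈ nhds θ := fun θ hθ => Icc_mem_nhds hθ.1 hθ.2
  have hd_kh : ∀ θ ∈ Ioo (-ψp) ψm, HasDerivAt kh (k1 θ) θ := by
    intro θ hθ
    have h1 : DifferentiableAt ℝ kh θ :=
      (hsmooth.differentiableOn (by simp)).differentiableAt (hmemN θ hθ)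
    have h2 : k1 θ = deriv kh θ := derivWithin_of_mem_nhds (hmemN θ hθ)
    rw [h2]; exact h1.hasDerivAt
  have hd_k1 : ∀ θ ∈ Ioo (-ψp) ψm, HasDerivAt k1 (k2 θ) θ := by
    intro θ hθ
    have h1 : DifferentiableAt ℝ k1 θ :=
      (hk1s.differentiableOn (by simp)).differentiableAt (hmemN θ hθ)
    have h2 : k2 θ = deriv k1 θ := derivWithin_of_mem_nhds (hmemN θ hθ)
    rw [h2]; exact h1.hasDerivAt
  -- the primitives x and y
  set x : ℝ → ℝ := fun θ => ∫ t in ψm..θ, Real.cos t / kh t with hxdef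
  set y : ℝ → ℝ := fun θ => ∫ t in ψm..θ, Real.sin t / kh t with hydef
  have hsk : ContinuousOn (fun t => Real.sin t / kh t) K :=
    Real.continuous_sin.continuousOn.div hkc hne
  have hck : ContinuousOn (fun t => Real.cos t / kh t) K :=
    Real.continuous_cos.continuousOn.div hkc hne
  have h1k : ContinuousOn (fun t => 1 / kh t) K := continuousOn_const.div hkc hne
  have hmK : ψm ∈ K := right_mem_Icc.mpr hab.le
  have hpK : (-ψp) ∈ K := left_mem_Icc.mpr hab.le
  have hIIs : ∀ u ∈ K, ∀ v ∈ K,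
      IntervalIntegrable (fun t => Real.sin t / kh t) MeasureTheory.volume u v :=
    fun u hu v hv => (hsk.mono (uIcc_subset_Icc hu hv)).intervalIntegrable
  have hIIc : ∀ u ∈ K, ∀ v ∈ K,
      IntervalIntegrable (fun t => Real.cos t / kh t) MeasureTheory.volume u v :=
    fun u hu v hv => (hck.mono (uIcc_subset_Icc hu hv)).intervalIntegrable
  have huIccK : uIcc (-ψp) ψm = K := uIcc_of_le hab.le
  have hyc : ContinuousOn y K := by
    have := intervalIntegral.continuousOn_primitive_interval'
      (hIIs (-ψp) hpK ψm hmK) (right_mem_uIcc)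
    rwa [huIccK] at this
  have hxc : ContinuousOn x K := by
    have := intervalIntegral.continuousOn_primitive_interval'
      (hIIc (-ψp) hpK ψm hmK) (right_mem_uIcc)
    rwa [huIccK] at this
  have hdy : ∀ θ ∈ Ioo (-ψp) ψm, HasDerivAt y (Real.sin θ / kh θ) θ := by
    intro θ hθ
    have hθK : θ ∈ K := Ioo_subset_Icc_self hθ
    have hcΙ : ContinuousOn (fun t => Real.sin t / kh t) (Ioo (-ψp) ψm) :=
      hsk.mono Ioo_subset_Icc_self
    exact intervalIntegral.integral_hasDerivAt_right (hIIs ψm hmK θ hθK)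
      (hcΙ.stronglyMeasurableAtFilter isOpen_Ioo θ hθ)
      (hcΙ.continuousAt (isOpen_Ioo.mem_nhds hθ))
  have hdx : ∀ θ ∈ Ioo (-ψp) ψm, HasDerivAt x (Real.cos θ / kh θ) θ := by
    intro θ hθ
    have hθK : θ ∈ K := Ioo_subset_Icc_self hθ
    have hcΙ : ContinuousOn (fun t => Real.cos t / kh t) (Ioo (-ψp) ψm) :=
      hck.mono Ioo_subset_Icc_self
    exact intervalIntegral.integral_hasDerivAt_right (hIIc ψm hmK θ hθK)
      (hcΙ.stronglyMeasurableAtFilter isOpen_Ioo θ hθ)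
      (hcΙ.continuousAt (isOpen_Ioo.mem_nhds hθ))
  -- I is negative
  have hIneg : I < 0 := by
    have hpos : 0 < ∫ t in (-ψp)..ψm, -(1 / kh t) := by
      apply intervalIntegral_pos_of_pos_on
      · exact ((h1k.mono huIccK.subset).neg).intervalIntegrable
      · intro t ht
        have := hneg t (Ioo_subset_Icc_self ht)
        simp only [neg_pos]
        exact one_div_neg.mpr this
      · exact hab
    rw [intervalIntegral.integral_neg] at hpos
    rw [hIdef]; linarith
  have hIne : I ≠ 0 := hIneg.ne
  -- the conserved quantities F and G
  set F : ℝ → ℝ := fun θ => k1 θ * Real.sin θ - (kh θ + h) * Real.cos θ - α * y θ with hFdef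
  set G : ℝ → ℝ := fun θ => k1 θ * Real.cos θ + (kh θ + h) * Real.sin θ - α * x θ with hGdef
  have hFc : ContinuousOn F K :=
    ((hk1c.mul Real.continuous_sin.continuousOn).sub
      ((hkc.add continuousOn_const).mul Real.continuous_cos.continuousOn)).sub
      (continuousOn_const.mul hyc)
  have hGc : ContinuousOn G K :=
    ((hk1c.mul Real.continuous_cos.continuousOn).add
      ((hkc.add continuousOn_const).mul Real.continuous_sin.continuousOn)).sub
      (continuousOn_const.mul hxc)
  have hkey : ∀ θ ∈ Ioo (-ψp) ψm, α = kh θ * (k2 θ + kh θ + h) := by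
    intro θ hθ
    have h0 : kh θ ≠ 0 := hne θ (Ioo_subset_Icc_self hθ)
    have heqθ := heq θ hθ
    have h3 : kh θ * α = kh θ * (kh θ * (k2 θ + kh θ + h)) := by
      linear_combination heqθ
    exact mul_left_cancel₀ h0 h3
  have hFd : ∀ θ ∈ Ioo (-ψp) ψm, HasDerivAt F 0 θ := by
    intro θ hθ
    have h0 : kh θ ≠ 0 := hne θ (Ioo_subset_Icc_self hθ)
    have e1 : HasDerivAt F ((k2 θ * Real.sin θ + k1 θ * Real.cos θ)
        - (k1 θ * Real.cos θ + (kh θ + h) * (-Real.sin θ))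
        - α * (Real.sin θ / kh θ)) θ :=
      (((hd_k1 θ hθ).mul (Real.hasDerivAt_sin θ)).sub
        (((hd_kh θ hθ).add_const h).mul (Real.hasDerivAt_cos θ))).sub
        ((hdy θ hθ).const_mul α)
    have e2 : (k2 θ * Real.sin θ + k1 θ * Real.cos θ)
        - (k1 θ * Real.cos θ + (kh θ + h) * (-Real.sin θ))
        - α * (Real.sin θ / kh θ) = 0 := by
      rw [hkey θ hθ]
      field_simp
      ring
    rwa [e2] at e1
  have hGd : ∀ θ ∈ Ioo (-ψp) ψm, HasDerivAt G 0 θ := by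
    intro θ hθ
    have h0 : kh θ ≠ 0 := hne θ (Ioo_subset_Icc_self hθ)
    have e1 : HasDerivAt G ((k2 θ * Real.cos θ + k1 θ * (-Real.sin θ))
        + (k1 θ * Real.sin θ + (kh θ + h) * Real.cos θ)
        - α * (Real.cos θ / kh θ)) θ :=
      (((hd_k1 θ hθ).mul (Real.hasDerivAt_cos θ)).add
        (((hd_kh θ hθ).add_const h).mul (Real.hasDerivAt_sin θ))).sub
        ((hdx θ hθ).const_mul α)
    have e2 : (k2 θ * Real.cos θ + k1 θ * (-Real.sin θ))
        + (k1 θ * Real.sin θ + (kh θ + h) * Real.cos θ)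
        - α * (Real.cos θ / kh θ) = 0 := by
      rw [hkey θ hθ]
      field_simp
      ring
    rwa [e2] at e1
  have hFconst := const_on_Icc_aux hab hFc hFd
  have hGconst := const_on_Icc_aux hab hGc hGd
  have hy0 : y ψm = 0 := intervalIntegral.integral_same
  have hx0 : x ψm = 0 := intervalIntegral.integral_same
  have hFb : F ψm = 0 := by
    simp only [hFdef]
    rw [hbcp, hy0, Real.cot_eq_cos_div_sin]
    field_simp
    ring
  set D : ℝ := G ψm with hDdef
  have hI1 : ∀ θ ∈ K, k1 θ * Real.sin θ - (kh θ + h) * Real.cos θ - α * y θ = 0 := by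
    intro θ hθ
    have h1 := hFconst θ hθ
    rw [hFb] at h1
    simpa only [hFdef] using h1
  have hI2 : ∀ θ ∈ K, k1 θ * Real.cos θ + (kh θ + h) * Real.sin θ - α * x θ = D := by
    intro θ hθ
    have h1 := hGconst θ hθ
    simpa only [hGdef] using h1
  have hstar : ∀ θ ∈ K, kh θ + h
      = α * (x θ * Real.sin θ - y θ * Real.cos θ) + D * Real.sin θ := by
    intro θ hθ
    have e1 := hI1 θ hθ
    have e2 := hI2 θ hθ
    have pyth := Real.sin_sq_add_cos_sq θ
    linear_combination Real.sin θ * e2 - Real.cos θ * e1 - (kh θ + h) * pyth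
  -- integrate the identity
  have hint1 : IntervalIntegrable (fun θ => x θ * (Real.sin θ / kh θ))
      MeasureTheory.volume (-ψp) ψm := by
    apply ContinuousOn.intervalIntegrable
    rw [huIccK]
    exact hxc.mul hsk
  have hint2 : IntervalIntegrable (fun θ => y θ * (Real.cos θ / kh θ))
      MeasureTheory.volume (-ψp) ψm := by
    apply ContinuousOn.intervalIntegrable
    rw [huIccK]
    exact hyc.mul hck
  have hints : IntervalIntegrable (fun θ => Real.sin θ / kh θ)
      MeasureTheory.volume (-ψp) ψm := hIIs (-ψp) hpK ψm hmK
  have hint1k : IntervalIntegrable (fun θ => 1 / kh θ)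
      MeasureTheory.volume (-ψp) ψm := by
    apply ContinuousOn.intervalIntegrable
    rw [huIccK]
    exact h1k
  have hptwise : EqOn (fun θ => 1 + h * (1 / kh θ))
      (fun θ => α * (x θ * (Real.sin θ / kh θ)) - α * (y θ * (Real.cos θ / kh θ))
        + D * (Real.sin θ / kh θ)) K := by
    intro θ hθ
    have h0 : kh θ ≠ 0 := hne θ hθ
    have hs := hstar θ hθ
    show 1 + h * (1 / kh θ)
      = α * (x θ * (Real.sin θ / kh θ)) - α * (y θ * (Real.cos θ / kh θ))
        + D * (Real.sin θ / kh θ)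
    have hl : 1 + h * (1 / kh θ) = (kh θ + h) / kh θ := by field_simp
    rw [hl, hs]
    field_simp
  have hcongr : (∫ θ in (-ψp)..ψm, (1 + h * (1 / kh θ)))
      = ∫ θ in (-ψp)..ψm, (α * (x θ * (Real.sin θ / kh θ))
          - α * (y θ * (Real.cos θ / kh θ)) + D * (Real.sin θ / kh θ)) := by
    apply intervalIntegral.integral_congr
    rw [huIccK]
    exact hptwise
  have hLHS : (∫ θ in (-ψp)..ψm, (1 + h * (1 / kh θ))) = (ψm + ψp) + h * I := by
    rw [intervalIntegral.integral_add intervalIntegrable_const (hint1k.const_mul h),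
      intervalIntegral.integral_const, intervalIntegral.integral_const_mul]
    rw [hIdef]
    simp
  have hRHS : (∫ θ in (-ψp)..ψm, (α * (x θ * (Real.sin θ / kh θ))
      - α * (y θ * (Real.cos θ / kh θ)) + D * (Real.sin θ / kh θ)))
      = α * (∫ θ in (-ψp)..ψm, x θ * (Real.sin θ / kh θ))
        - α * (∫ θ in (-ψp)..ψm, y θ * (Real.cos θ / kh θ)) := by
    rw [intervalIntegral.integral_add ((hint1.const_mul α).sub (hint2.const_mul α))
        (hints.const_mul D),
      intervalIntegral.integral_sub (hint1.const_mul α) (hint2.const_mul α),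
      intervalIntegral.integral_const_mul, intervalIntegral.integral_const_mul,
      intervalIntegral.integral_const_mul, hend]
    ring
  -- identify the area
  have hA1 : (∫ θ in (-ψp)..ψm, (Real.sin θ / kh θ) * ∫ θ' in θ..ψm, Real.cos θ' / kh θ')
      = -(∫ θ in (-ψp)..ψm, x θ * (Real.sin θ / kh θ)) := by
    rw [← intervalIntegral.integral_neg]
    apply intervalIntegral.integral_congr
    intro θ hθ
    have hxθ : x θ = -∫ θ' in θ..ψm, Real.cos θ' / kh θ' := intervalIntegral.integral_symm θ ψm
    show (Real.sin θ / kh θ) * (∫ θ' in θ..ψm, Real.cos θ' / kh θ')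
      = -(x θ * (Real.sin θ / kh θ))
    rw [hxθ]; ring
  have hA2 : (∫ θ in (-ψp)..ψm, (Real.cos θ / kh θ) * ∫ θ' in θ..ψm, Real.sin θ' / kh θ')
      = -(∫ θ in (-ψp)..ψm, y θ * (Real.cos θ / kh θ)) := by
    rw [← intervalIntegral.integral_neg]
    apply intervalIntegral.integral_congr
    intro θ hθ
    have hyθ : y θ = -∫ θ' in θ..ψm, Real.sin θ' / kh θ' := intervalIntegral.integral_symm θ ψm
    show (Real.cos θ / kh θ) * (∫ θ' in θ..ψm, Real.sin θ' / kh θ')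
      = -(y θ * (Real.cos θ / kh θ))
    rw [hyθ]; ring
  have hareaEq : 2 * signedArea ψp ψm kh
      = (∫ θ in (-ψp)..ψm, x θ * (Real.sin θ / kh θ))
        - (∫ θ in (-ψp)..ψm, y θ * (Real.cos θ / kh θ)) := by
    rw [signedArea, hA1, hA2]
    ring
  -- conclude α = 0
  have hhI : h * I = -(ψp + ψm) := by
    rw [hhdef, div_mul_eq_mul_div, div_neg, mul_div_assoc, div_self hIne, mul_one]
  have hLHS0 : (ψm + ψp) + h * I = 0 := by rw [hhI]; ring
  have hfin : 0 = α * (2 * signedArea ψp ψm kh) := by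
    rw [hareaEq, mul_sub, ← hRHS, ← hcongr, hLHS]
    exact hLHS0.symm
  have hα : α = 0 := by
    rcases mul_eq_zero.mp hfin.symm with h'|h'
    · exact h'
    · linarith
  refine ⟨hα, -D, ?_⟩
  intro θ hθ
  have hs := hstar θ hθ
  rw [hα] at hs
  linear_combination hs
end
end
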